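/- arXiv:2110.02603 — 3 statements merged into one kernel-verified Lean document; each statement's English description precedes it below -/
import Mathlib

section
/- Let ξ be a nonnegative integrable random variable and θ > 0. Then the truncated exponential moment satisfies E[exp(θξ) 1_{ξ ≤ 1/θ}] ≤ 1 + θ E[ξ] + θ ∫_0^{1/θ} P(ξ > t)(e^{θt} - 1) dt. -/
open MeasureTheory ProbabilityTheory

/-- Truncated exponential moment bound: for a nonnegative integrable random variable `ξ` and
`θ > 0`, `E[exp(θξ) 1_{ξ ≤ 1/θ}] ≤ 1 + θ E[ξ] + θ ∫_0^{1/θ} P(ξ > t)(e^{θt} - 1) dt`. -/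
theorem truncated_exponential_moment_bound
    {Ω : Type*} [MeasureSpace Ω] [IsProbabilityMeasure (ℙ : Measure Ω)]
    (ξ : Ω → ℝ) (hmeas : Measurable ξ) (hnonneg : ∀ ω, 0 ≤ ξ ω)
    (hint : Integrable ξ) (θ : ℝ) (hθ : 0 < θ) :
    ∫ ω in {ω | ξ ω ≤ 1 / θ}, Real.exp (θ * ξ ω) ≤
      1 + θ * (∫ ω, ξ ω) +
        θ * ∫ t in Set.Ioc (0 : ℝ) (1 / θ),
          (ℙ {ω | t < ξ ω}).toReal * (Real.exp (θ * t) - 1) := by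
  set a : ℝ := 1 / θ with ha_def
  have ha : 0 < a := by positivity
  have hθa : θ * a = 1 := by rw [ha_def]; exact mul_one_div_cancel hθ.ne'
  set ν : Measure ℝ := volume.restrict (Set.Ioc 0 a) with hν_def
  set f : Ω × ℝ → ℝ :=
    fun p => if p.2 < ξ p.1 ∧ p.2 ≤ a then Real.exp (θ * p.2) - 1 else 0 with hf_def
  have hf_meas : Measurable f := by
    have hset : MeasurableSet {p : Ω × ℝ | p.2 < ξ p.1 ∧ p.2 ≤ a} := by
      have : {p : Ω × ℝ | p.2 < ξ p.1 ∧ p.2 ≤ a}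
          = {p : Ω × ℝ | p.2 < ξ p.1} ∩ {p : Ω × ℝ | p.2 ≤ a} := rfl
      rw [this]
      exact (measurableSet_lt measurable_snd (hmeas.comp measurable_fst)).inter
        (measurableSet_le measurable_snd measurable_const)
    exact Measurable.ite hset
      ((Real.measurable_exp.comp (measurable_const.mul measurable_snd)).sub measurable_const)
      measurable_const
  have hf_bdd : ∀ p, ‖f p‖ ≤ Real.exp 1 + 1 := by
    intro p
    rw [hf_def]
    by_cases h : p.2 < ξ p.1 ∧ p.2 ≤ a
    · simp only [if_pos h]
      rw [Real.norm_eq_abs, abs_le]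
      constructor
      · have := Real.exp_nonneg (θ * p.2); nlinarith [Real.exp_pos (1:ℝ)]
      · have h1 : θ * p.2 ≤ 1 := by
          calc θ * p.2 ≤ θ * a := by nlinarith [h.2]
          _ = 1 := hθa
        have := Real.exp_le_exp.2 h1
        linarith
    · simp only [if_neg h]
      simp only [norm_zero]
      positivity
  have hf_int : Integrable f ((ℙ : Measure Ω).prod ν) := by
    refine Integrable.mono' (integrable_const (Real.exp 1 + 1))
      hf_meas.aestronglyMeasurable (ae_of_all _ hf_bdd)
  set F : Ω → ℝ := fun ω => ∫ t, f (ω, t) ∂ν with hF_def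
  have hF_int : Integrable F ℙ := hf_int.integral_prod_left
  have hF_nonneg : ∀ ω, 0 ≤ F ω := by
    intro ω
    rw [hF_def]
    simp only [hν_def]
    refine setIntegral_nonneg measurableSet_Ioc fun t ht => ?_
    rw [hf_def]
    by_cases h : t < ξ ω ∧ t ≤ a
    · simp only [if_pos h]
      have : (1:ℝ) ≤ Real.exp (θ * t) := by
        rw [← Real.exp_zero]
        exact Real.exp_le_exp.2 (by nlinarith [ht.1])
      linarith
    · simp [h]
  -- exact expression for F on the truncation set
  have hF_eq : ∀ ω, ξ ω ≤ a →
      F ω = ∫ t in Set.Ioc 0 (ξ ω), (Real.exp (θ * t) - 1) := by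
    intro ω hxa
    have h0 : 0 ≤ ξ ω := hnonneg ω
    have h1 : F ω = ∫ t in Set.Ioc 0 a,
        Set.indicator (Set.Iio (ξ ω)) (fun t => Real.exp (θ * t) - 1) t := by
      refine setIntegral_congr_fun measurableSet_Ioc fun t ht => ?_
      simp only [hf_def, Set.indicator, Set.mem_Iio]
      by_cases h : t < ξ ω <;> simp [h, ht.2]
    rw [h1, setIntegral_indicator measurableSet_Iio]
    have hset : Set.Ioc 0 a ∩ Set.Iio (ξ ω) = Set.Ioo 0 (ξ ω) := by
      ext t
      constructor
      · rintro ⟨⟨ht1, _⟩, ht3⟩; exact ⟨ht1, ht3⟩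
      · rintro ⟨ht1, ht2⟩; exact ⟨⟨ht1, le_trans ht2.le hxa⟩, ht2⟩
    rw [hset, ← integral_Ioc_eq_integral_Ioo]
  -- pointwise identity
  have hkey : ∀ ω, ξ ω ≤ a → Real.exp (θ * ξ ω) = 1 + θ * ξ ω + θ * F ω := by
    intro ω hxa
    have h0 : 0 ≤ ξ ω := hnonneg ω
    rw [hF_eq ω hxa]
    set x := ξ ω with hx
    have hderiv : ∀ t ∈ Set.uIcc (0:ℝ) x,
        HasDerivAt (fun t => Real.exp (θ * t) / θ - t) (Real.exp (θ * t) - 1) t := by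
      intro t _
      have h1 : HasDerivAt (fun t : ℝ => θ * t) θ t := by
        simpa using (hasDerivAt_id t).const_mul θ
      have h2 : HasDerivAt (fun t : ℝ => Real.exp (θ * t)) (Real.exp (θ * t) * θ) t :=
        (Real.hasDerivAt_exp (θ * t)).comp t h1
      have h3 : HasDerivAt (fun t : ℝ => Real.exp (θ * t) / θ)
          (Real.exp (θ * t) * θ / θ) t := h2.div_const θ
      have h4 : Real.exp (θ * t) * θ / θ = Real.exp (θ * t) := by field_simp
      rw [h4] at h3
      exact h3.sub (hasDerivAt_id' t)
    have hInt : ∫ t in (0:ℝ)..x, (Real.exp (θ * t) - 1)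
        = (Real.exp (θ * x) / θ - x) - (Real.exp (θ * 0) / θ - 0) :=
      intervalIntegral.integral_eq_sub_of_hasDerivAt hderiv
        (Continuous.intervalIntegrable (by continuity) 0 x)
    rw [intervalIntegral.integral_of_le h0] at hInt
    rw [hInt]
    rw [mul_zero, Real.exp_zero]
    field_simp
    ring
  set g : Ω → ℝ := fun ω => 1 + θ * ξ ω + θ * F ω with hg_def
  have hg_int : Integrable g ℙ :=
    ((integrable_const (1:ℝ)).add (hint.const_mul θ)).add (hF_int.const_mul θ)
  have hS : MeasurableSet {ω | ξ ω ≤ a} := measurableSet_le hmeas measurable_const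
  have step1 : ∫ ω in {ω | ξ ω ≤ a}, Real.exp (θ * ξ ω) ≤ ∫ ω in {ω | ξ ω ≤ a}, g ω := by
    refine setIntegral_mono_on ?_ hg_int.integrableOn hS fun ω hω => (hkey ω hω).le
    refine Integrable.mono' (integrable_const (Real.exp 1))
      ((Real.measurable_exp.comp (measurable_const.mul hmeas)).aestronglyMeasurable) ?_
    refine (ae_restrict_iff' hS).2 (ae_of_all _ fun ω hω => ?_)
    rw [Real.norm_eq_abs, abs_of_pos (Real.exp_pos _)]
    refine Real.exp_le_exp.2 ?_
    calc θ * ξ ω ≤ θ * a := by nlinarith [Set.mem_setOf_eq ▸ hω]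
      _ = 1 := hθa
  have step2 : ∫ ω in {ω | ξ ω ≤ a}, g ω ≤ ∫ ω, g ω := by
    refine setIntegral_le_integral hg_int (ae_of_all _ fun ω => ?_)
    have h0 := hnonneg ω
    have h1 := hF_nonneg ω
    simp only [hg_def]
    positivity
  have step3 : ∫ ω, g ω = 1 + θ * (∫ ω, ξ ω) + θ * ∫ ω, F ω := by
    rw [hg_def]
    rw [integral_add (f := fun ω => 1 + θ * ξ ω) (g := fun ω => θ * F ω)
      ((integrable_const (1:ℝ)).add (hint.const_mul θ)) (hF_int.const_mul θ),
      integral_add (f := fun _ => (1:ℝ)) (g := fun ω => θ * ξ ω)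
      (integrable_const (1:ℝ)) (hint.const_mul θ),
      integral_const, integral_const_mul, integral_const_mul]
    simp [measure_univ]
  have step4 : ∫ ω, F ω
      = ∫ t in Set.Ioc (0:ℝ) a, (ℙ {ω | t < ξ ω}).toReal * (Real.exp (θ * t) - 1) := by
    have hswap : ∫ ω, ∫ t, f (ω, t) ∂ν ∂ℙ = ∫ t, ∫ ω, f (ω, t) ∂ℙ ∂ν :=
      integral_integral_swap (f := fun ω t => f (ω, t)) (by exact hf_int)
    rw [hF_def]
    rw [hswap, hν_def]
    refine setIntegral_congr_fun measurableSet_Ioc fun t ht => ?_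
    have heq : ∀ ω, f (ω, t)
        = Set.indicator {ω | t < ξ ω} (fun _ => Real.exp (θ * t) - 1) ω := by
      intro ω
      simp only [hf_def, Set.indicator, Set.mem_setOf_eq]
      by_cases h : t < ξ ω <;> simp [h, ht.2]
    calc ∫ ω, f (ω, t) ∂ℙ
        = ∫ ω, Set.indicator {ω | t < ξ ω} (fun _ => Real.exp (θ * t) - 1) ω ∂ℙ := by
          exact integral_congr_ae (ae_of_all _ heq)
      _ = ∫ ω in {ω | t < ξ ω}, (Real.exp (θ * t) - 1) ∂ℙ :=
          integral_indicator (measurableSet_lt measurable_const hmeas)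
      _ = (ℙ {ω | t < ξ ω}).toReal * (Real.exp (θ * t) - 1) := by
          rw [setIntegral_const, smul_eq_mul]; rfl
  calc ∫ ω in {ω | ξ ω ≤ 1/θ}, Real.exp (θ * ξ ω)
      ≤ ∫ ω in {ω | ξ ω ≤ a}, g ω := step1
    _ ≤ ∫ ω, g ω := step2
    _ = 1 + θ * (∫ ω, ξ ω) + θ * ∫ ω, F ω := step3
    _ = 1 + θ * (∫ ω, ξ ω)
        + θ * ∫ t in Set.Ioc (0:ℝ) (1/θ), (ℙ {ω | t < ξ ω}).toReal * (Real.exp (θ * t) - 1) := by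
          rw [step4]
end

section
/- Let 1 < p ≤ 2 and let Y_1, …, Y_n be independent real random variables with E[Y_k] = 0 and E|Y_k|^p < ∞. Then E|∑_{k=1}^n Y_k|^p ≤ 2 ∑_{k=1}^n E|Y_k|^p. -/
open MeasureTheory ProbabilityTheory

section VonBahrEsseenAux

variable {p : ℝ}


variable {p : ℝ}

/-- Subadditivity of `t ^ q` for `0 ≤ q ≤ 1` on nonnegative reals. -/
lemma vbe_rpow_subadd {a b : ℝ} {q : ℝ} (ha : 0 ≤ a) (hb : 0 ≤ b) (hq0 : 0 ≤ q) (hq1 : q ≤ 1) :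
    (a + b) ^ q ≤ a ^ q + b ^ q := by
  have := NNReal.rpow_add_le_add_rpow (⟨a, ha⟩ : NNReal) (⟨b, hb⟩ : NNReal) hq0 hq1
  have h2 := NNReal.coe_le_coe.2 this
  push_cast [NNReal.coe_rpow] at h2
  exact h2

/-- Convexity gradient inequality: `b^p + p b^(p-1) (a - b) ≤ a^p`. -/
lemma vbe_grad {a b : ℝ} (ha : 0 ≤ a) (hb : 0 < b) (hp : 1 ≤ p) :
    b ^ p + p * b ^ (p - 1) * (a - b) ≤ a ^ p := by
  have hs : (-1 : ℝ) ≤ a / b - 1 := by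
    have : 0 ≤ a / b := div_nonneg ha hb.le
    linarith
  have h := one_add_mul_self_le_rpow_one_add hs hp
  have hbp : (0 : ℝ) < b ^ p := Real.rpow_pos_of_pos hb _
  have hb1 : b ^ (p - 1) * b = b ^ p := by
    rw [show b ^ (p - 1) * b = b ^ (p - 1) * b ^ (1:ℝ) from by rw [Real.rpow_one],
      ← Real.rpow_add hb]
    congr 1; ring
  have habp : (a / b) ^ p * b ^ p = a ^ p := by
    rw [← Real.mul_rpow (div_nonneg ha hb.le) hb.le]
    rw [div_mul_cancel₀ _ hb.ne']
  have key : (1 + p * (a / b - 1)) * b ^ p ≤ (a / b) ^ p * b ^ p := by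
    apply mul_le_mul_of_nonneg_right _ hbp.le
    calc 1 + p * (a / b - 1) ≤ (1 + (a / b - 1)) ^ p := h
      _ = (a / b) ^ p := by ring_nf
  rw [habp] at key
  refine le_trans (le_of_eq ?_) key
  have : p * (a / b - 1) * b ^ p = p * b ^ (p - 1) * (a - b) := by
    have : (a / b - 1) * b = a - b := by field_simp
    calc p * (a / b - 1) * b ^ p = p * (a / b - 1) * (b ^ (p - 1) * b) := by rw [hb1]
      _ = p * b ^ (p - 1) * ((a / b - 1) * b) := by ring
      _ = p * b ^ (p - 1) * (a - b) := by rw [this]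
  linarith [this]

/-- Weighted Young: `p * a^(p-1) * b ≤ (p-1) * a^p + b^p` for `a b ≥ 0`, `1 < p`. -/
lemma vbe_young {a b : ℝ} (ha : 0 ≤ a) (hb : 0 ≤ b) (hp : 1 < p) :
    p * a ^ (p - 1) * b ≤ (p - 1) * a ^ p + b ^ p := by
  have hp0 : (0 : ℝ) < p := by linarith
  have hw1 : (0 : ℝ) ≤ (p - 1) / p := div_nonneg (by linarith) hp0.le
  have hw2 : (0 : ℝ) ≤ 1 / p := by positivity
  have hsum : (p - 1) / p + 1 / p = 1 := by field_simp; ring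
  have h := Real.geom_mean_le_arith_mean2_weighted hw1 hw2
    (Real.rpow_nonneg ha p) (Real.rpow_nonneg hb p) hsum
  have e1 : (a ^ p) ^ ((p - 1) / p) = a ^ (p - 1) := by
    rw [← Real.rpow_mul ha]
    congr 1
    field_simp
  have e2 : (b ^ p) ^ (1 / p) = b := by
    rw [← Real.rpow_mul hb, mul_one_div, div_self hp0.ne', Real.rpow_one]
  rw [e1, e2] at h
  have h2 := mul_le_mul_of_nonneg_left h hp0.le
  calc p * a ^ (p - 1) * b = p * (a ^ (p - 1) * b) := by ring
    _ ≤ p * ((p - 1) / p * a ^ p + 1 / p * b ^ p) := h2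
    _ = (p - 1) * a ^ p + b ^ p := by field_simp

/-- The key pointwise inequality for the von Bahr–Esseen theorem, `y > 0` case. -/
lemma vbe_key_pos (hp1 : 1 < p) (hp2 : p ≤ 2) (x : ℝ) {y : ℝ} (hy : 0 < y) :
    |x + y| ^ p ≤ |x| ^ p + p * (x * |x| ^ (p - 2)) * y + 2 * y ^ p := by
  have hp0 : (0 : ℝ) < p := by linarith
  have hq0 : (0 : ℝ) ≤ p - 1 := by linarith
  have hq1 : p - 1 ≤ 1 := by linarith
  rcases le_or_gt 0 x with hx | hx
  · -- x ≥ 0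
    have hterm : x * |x| ^ (p - 2) = x ^ (p - 1) := by
      rcases eq_or_lt_of_le hx with h0 | h0
      · rw [← h0]
        simp [Real.zero_rpow (by linarith : p - 1 ≠ 0)]
      · rw [abs_of_pos h0,
          show x * x ^ (p - 2) = x ^ (1:ℝ) * x ^ (p - 2) from by rw [Real.rpow_one],
          ← Real.rpow_add h0]
        congr 1; ring
    rw [hterm, abs_of_nonneg (by linarith : 0 ≤ x + y), abs_of_nonneg hx]
    -- (x+y)^p ≤ x^p + p y (x+y)^{p-1} ≤ x^p + p x^{p-1} y + p y^p
    have h1 := vbe_grad hx (by linarith : (0:ℝ) < x + y) hp1.le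
    -- (x+y)^p + p (x+y)^(p-1) * (x - (x+y)) ≤ x^p
    have h2 : (x + y) ^ p ≤ x ^ p + p * (x + y) ^ (p - 1) * y := by nlinarith [h1]
    have h3 : (x + y) ^ (p - 1) ≤ x ^ (p - 1) + y ^ (p - 1) :=
      vbe_rpow_subadd hx hy.le hq0 hq1
    have h4 : y ^ (p - 1) * y = y ^ p := by
      rw [show y ^ (p-1) * y = y ^ (p-1) * y ^ (1:ℝ) from by rw [Real.rpow_one],
        ← Real.rpow_add hy]
      congr 1; ring
    have h5 : y ^ p ≤ 2 * y ^ p := by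
      have := Real.rpow_nonneg hy.le p
      linarith
    nlinarith [mul_le_mul_of_nonneg_right h3 hy.le, mul_le_mul_of_nonneg_left
      (mul_le_mul_of_nonneg_right h3 hy.le) hp0.le]
  · -- x < 0
    set s := -x with hs
    have hs0 : 0 < s := by simp [hs]; linarith
    have habs : |x| = s := by rw [abs_of_neg hx]
    have hterm : x * |x| ^ (p - 2) = -(s ^ (p - 1)) := by
      rw [habs]
      rw [show x * s ^ (p - 2) = -(s * s ^ (p-2)) from by rw [hs]; ring]
      congr 1
      rw [show s * s ^ (p - 2) = s ^ (1:ℝ) * s ^ (p - 2) from by rw [Real.rpow_one],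
        ← Real.rpow_add hs0]
      congr 1; ring
    rw [hterm, habs]
    have hsp : (0:ℝ) ≤ s ^ p := Real.rpow_nonneg hs0.le p
    have hyp : (0:ℝ) ≤ y ^ p := Real.rpow_nonneg hy.le p
    rcases le_or_gt s y with hsy | hsy
    · -- 0 < s ≤ y : |x+y| = y - s
      have : x + y = y - s := by rw [hs]; ring
      rw [this, abs_of_nonneg (by linarith)]
      have h1 : (y - s) ^ p ≤ y ^ p :=
        Real.rpow_le_rpow (by linarith) (by linarith) hp0.le
      have h2 : p * s ^ (p - 1) * y ≤ (p - 1) * s ^ p + y ^ p :=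
        vbe_young hs0.le hy.le hp1
      have h3 : (p - 1) * s ^ p ≤ s ^ p := by nlinarith
      nlinarith
    · -- 0 < y < s : |x+y| = s - y
      have : x + y = -(s - y) := by rw [hs]; ring
      rw [this, abs_neg, abs_of_nonneg (by linarith)]
      have h1 := vbe_grad hs0.le (by linarith : (0:ℝ) < s - y) hp1.le
      -- (s-y)^p + p (s-y)^(p-1) (s - (s-y)) ≤ s^p
      have h2 : (s - y) ^ p + p * (s - y) ^ (p - 1) * y ≤ s ^ p := by nlinarith [h1]
      have h3 : s ^ (p - 1) ≤ (s - y) ^ (p - 1) + y ^ (p - 1) := by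
        have := vbe_rpow_subadd (by linarith : (0:ℝ) ≤ s - y) hy.le hq0 hq1
        rw [show s - y + y = s by ring] at this
        exact this
      have h4 : y ^ (p - 1) * y = y ^ p := by
        rw [show y ^ (p-1) * y = y ^ (p-1) * y ^ (1:ℝ) from by rw [Real.rpow_one],
          ← Real.rpow_add hy]
        congr 1; ring
      have h5 : p ≤ 2 := hp2
      nlinarith [mul_le_mul_of_nonneg_right h3 hy.le, mul_le_mul_of_nonneg_left
        (mul_le_mul_of_nonneg_right h3 hy.le) hp0.le]

/-- The key pointwise inequality for the von Bahr–Esseen theorem. -/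
lemma vbe_key (hp1 : 1 < p) (hp2 : p ≤ 2) (x y : ℝ) :
    |x + y| ^ p ≤ |x| ^ p + p * (x * |x| ^ (p - 2)) * y + 2 * |y| ^ p := by
  rcases lt_trichotomy y 0 with hy | hy | hy
  · have h := vbe_key_pos hp1 hp2 (-x) (by linarith : (0:ℝ) < -y)
    rw [show -x + -y = -(x + y) by ring, abs_neg, abs_neg] at h
    rw [abs_of_neg hy]
    calc |x + y| ^ p ≤ |x| ^ p + p * (-x * |x| ^ (p - 2)) * (-y) + 2 * (-y) ^ p := h
      _ = |x| ^ p + p * (x * |x| ^ (p - 2)) * y + 2 * (-y) ^ p := by ring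
  · subst hy
    simp [Real.zero_rpow (by linarith : p ≠ 0)]
  · rw [abs_of_pos hy]
    exact vbe_key_pos hp1 hp2 x hy


/-- Measurability of `t ↦ |t| ^ c` for arbitrary real `c`. -/
lemma vbe_meas_psi (c : ℝ) : Measurable fun t : ℝ => |t| ^ c := by
  have h : (fun t : ℝ => |t| ^ c)
      = fun t => if t = 0 then (0:ℝ) ^ c else Real.exp (Real.log |t| * c) := by
    funext t
    split_ifs with h
    · simp [h]
    · rw [Real.rpow_def_of_pos (abs_pos.2 h)]
  rw [h]
  exact Measurable.ite (measurableSet_eq)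
    measurable_const
    (Real.measurable_exp.comp ((Real.measurable_log.comp measurable_abs).mul_const c))

lemma vbe_psi_bound (hp1 : 1 < p) (t : ℝ) : |t * |t| ^ (p - 2)| ≤ 1 + |t| ^ p := by
  rcases eq_or_ne t 0 with rfl | ht
  · simp
    positivity
  · have habs : |t * |t| ^ (p - 2)| = |t| ^ (p - 1) := by
      rw [abs_mul, abs_of_nonneg (Real.rpow_nonneg (abs_nonneg t) _)]
      rw [show |t| * |t| ^ (p - 2) = |t| ^ (1:ℝ) * |t| ^ (p - 2) from by rw [Real.rpow_one],
        ← Real.rpow_add (abs_pos.2 ht)]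
      congr 1; ring
    rw [habs]
    rcases le_or_gt |t| 1 with h | h
    · have h1 := Real.rpow_le_one (abs_nonneg t) h (by linarith : (0:ℝ) ≤ p - 1)
      have h2 : 0 ≤ |t| ^ p := Real.rpow_nonneg (abs_nonneg t) p
      linarith
    · have h1 := Real.rpow_le_rpow_of_exponent_le h.le (by linarith : p - 1 ≤ p)
      linarith

lemma vbe_abs_le (hp1 : 1 < p) (t : ℝ) : |t| ≤ 1 + |t| ^ p := by
  rcases le_or_gt |t| 1 with h | h
  · have h2 : 0 ≤ |t| ^ p := Real.rpow_nonneg (abs_nonneg t) p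
    linarith
  · have h1 := Real.rpow_le_rpow_of_exponent_le h.le (le_of_lt hp1)
    rw [Real.rpow_one] at h1
    linarith

lemma vbe_add_bound (hp0 : 0 ≤ p) (hp2 : p ≤ 2) (x z : ℝ) :
    |x + z| ^ p ≤ 4 * (|x| ^ p + |z| ^ p) := by
  have h2 : |x + z| ^ p ≤ (|x| + |z|) ^ p :=
    Real.rpow_le_rpow (abs_nonneg _) (abs_add_le x z) hp0
  have hm : (0:ℝ) ≤ max |x| |z| := le_trans (abs_nonneg x) (le_max_left _ _)
  have h3 : |x| + |z| ≤ 2 * max |x| |z| := by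
    rcases le_total |x| |z| with h | h
    · rw [max_eq_right h]; linarith [abs_nonneg x]
    · rw [max_eq_left h]; linarith [abs_nonneg z]
  have h4 : (|x| + |z|) ^ p ≤ (2 * max |x| |z|) ^ p :=
    Real.rpow_le_rpow (by positivity) h3 hp0
  have h5 : (2 * max |x| |z|) ^ p = 2 ^ p * (max |x| |z|) ^ p :=
    Real.mul_rpow (by norm_num) hm
  have h6 : (2:ℝ) ^ p ≤ 4 := by
    have h := Real.rpow_le_rpow_of_exponent_le (by norm_num : (1:ℝ) ≤ 2) hp2
    have h24 : (2:ℝ) ^ (2:ℝ) = 4 := by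
      rw [show (2:ℝ) ^ (2:ℝ) = (2:ℝ) ^ ((2:ℕ):ℝ) from by norm_num, Real.rpow_natCast]
      norm_num
    linarith [h24 ▸ h]
  have h7 : (max |x| |z|) ^ p ≤ |x| ^ p + |z| ^ p := by
    rcases le_total |x| |z| with h | h
    · rw [max_eq_right h]
      have := Real.rpow_nonneg (abs_nonneg x) p
      linarith
    · rw [max_eq_left h]
      have := Real.rpow_nonneg (abs_nonneg z) p
      linarith
  have h8 : (0:ℝ) ≤ (max |x| |z|) ^ p := Real.rpow_nonneg hm p
  have h9 : (2:ℝ) ^ p * (max |x| |z|) ^ p ≤ 4 * (max |x| |z|) ^ p :=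
    mul_le_mul_of_nonneg_right h6 h8
  nlinarith

lemma vbe_step {Ω : Type*} [MeasureSpace Ω] [IsProbabilityMeasure (ℙ : Measure Ω)]
    (hp1 : 1 < p) (hp2 : p ≤ 2) (X Z : Ω → ℝ) (hX : Measurable X) (hZ : Measurable Z)
    (hind : IndepFun X Z ℙ) (hZ0 : ∫ ω, Z ω = 0)
    (hXp : Integrable (fun ω => |X ω| ^ p)) (hZp : Integrable (fun ω => |Z ω| ^ p)) :
    Integrable (fun ω => |X ω + Z ω| ^ p) ∧
      ∫ ω, |X ω + Z ω| ^ p ≤ (∫ ω, |X ω| ^ p) + 2 * ∫ ω, |Z ω| ^ p := by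
  have hp0 : (0:ℝ) < p := lt_trans one_pos hp1
  set ψ : ℝ → ℝ := fun t => t * |t| ^ (p - 2) with hψdef
  have hψm : Measurable ψ := measurable_id.mul (vbe_meas_psi (p - 2))
  have hψX : Integrable (fun ω => ψ (X ω)) := by
    refine Integrable.mono' ((integrable_const (1:ℝ)).add hXp)
      ((hψm.comp hX).aestronglyMeasurable) ?_
    filter_upwards with ω
    simpa [hψdef] using vbe_psi_bound hp1 (X ω)
  have hZint : Integrable Z := by
    refine Integrable.mono' ((integrable_const (1:ℝ)).add hZp) hZ.aestronglyMeasurable ?_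
    filter_upwards with ω
    simpa using vbe_abs_le hp1 (Z ω)
  have hindψ : IndepFun (fun ω => ψ (X ω)) Z ℙ := hind.comp hψm measurable_id
  have hprod : Integrable (fun ω => ψ (X ω) * Z ω) := by
    have := hindψ.integrable_mul hψX hZint
    exact this
  have hprod0 : ∫ ω, ψ (X ω) * Z ω = 0 := by
    have h := hindψ.integral_fun_mul_eq_mul_integral hψX.aestronglyMeasurable hZint.aestronglyMeasurable
    have h2 : ∫ ω, ψ (X ω) * Z ω = (∫ ω, ψ (X ω)) * ∫ ω, Z ω := h
    rw [h2, hZ0, mul_zero]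
  have hfm : Measurable (fun ω => |X ω + Z ω| ^ p) :=
    ((Real.continuous_rpow_const hp0.le).measurable).comp (hX.add hZ).abs
  have hfint : Integrable (fun ω => |X ω + Z ω| ^ p) := by
    refine Integrable.mono' ((hXp.add hZp).const_mul 4) hfm.aestronglyMeasurable ?_
    filter_upwards with ω
    rw [Real.norm_eq_abs, abs_of_nonneg (Real.rpow_nonneg (abs_nonneg _) _)]
    exact vbe_add_bound hp0.le hp2 (X ω) (Z ω)
  refine ⟨hfint, ?_⟩
  have hmid : Integrable (fun ω => p * (ψ (X ω) * Z ω)) := hprod.const_mul p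
  have hW : Integrable (fun ω => |X ω| ^ p + p * (ψ (X ω) * Z ω) + 2 * |Z ω| ^ p) :=
    (hXp.add hmid).add (hZp.const_mul 2)
  have hle : ∫ ω, |X ω + Z ω| ^ p
      ≤ ∫ ω, (|X ω| ^ p + p * (ψ (X ω) * Z ω) + 2 * |Z ω| ^ p) := by
    refine integral_mono hfint hW fun ω => ?_
    have := vbe_key hp1 hp2 (X ω) (Z ω)
    simpa [hψdef, mul_assoc] using this
  have heq : ∫ ω, (|X ω| ^ p + p * (ψ (X ω) * Z ω) + 2 * |Z ω| ^ p)
      = (∫ ω, |X ω| ^ p) + p * (∫ ω, ψ (X ω) * Z ω) + 2 * ∫ ω, |Z ω| ^ p := by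
    have hAB : Integrable (fun ω => |X ω| ^ p + p * (ψ (X ω) * Z ω)) := hXp.add hmid
    have hC : Integrable (fun ω => 2 * |Z ω| ^ p) := hZp.const_mul 2
    rw [integral_add hAB hC, integral_add hXp hmid, MeasureTheory.integral_const_mul, MeasureTheory.integral_const_mul]
  rw [heq, hprod0, mul_zero, add_zero] at hle
  exact hle

end VonBahrEsseenAux

/-- The von Bahr–Esseen inequality: for `1 < p ≤ 2` and independent centred real random
variables `Y_1, …, Y_n` with finite `p`-th moments,
`E|∑ Y_k|^p ≤ 2 ∑ E|Y_k|^p`. -/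

theorem von_bahr_esseen
    {Ω : Type*} [MeasureSpace Ω] [IsProbabilityMeasure (ℙ : Measure Ω)]
    (p : ℝ) (hp1 : 1 < p) (hp2 : p ≤ 2) (n : ℕ)
    (Y : Fin n → Ω → ℝ) (hmeas : ∀ k, Measurable (Y k))
    (hindep : iIndepFun Y ℙ)
    (hmean : ∀ k, ∫ ω, Y k ω = 0)
    (hmom : ∀ k, Integrable (fun ω => |Y k ω| ^ p)) :
    ∫ ω, |∑ k, Y k ω| ^ p ≤ 2 * ∑ k, ∫ ω, |Y k ω| ^ p := by
  classical
  have hp0 : p ≠ 0 := by intro h; rw [h] at hp1; norm_num at hp1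
  have main : ∀ s : Finset (Fin n),
      Integrable (fun ω => |∑ k ∈ s, Y k ω| ^ p) ∧
        ∫ ω, |∑ k ∈ s, Y k ω| ^ p ≤ 2 * ∑ k ∈ s, ∫ ω, |Y k ω| ^ p := by
    intro s
    induction s using Finset.induction_on with
    | empty =>
      constructor
      · simpa [Real.zero_rpow hp0] using integrable_const (0:ℝ)
      · simp [Real.zero_rpow hp0]
    | @insert i s hi ih =>
      obtain ⟨ih1, ih2⟩ := ih
      have hXm : Measurable (fun ω => ∑ k ∈ s, Y k ω) :=
        Finset.measurable_sum s fun k _ => hmeas k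
      have hind' : IndepFun (fun ω => ∑ k ∈ s, Y k ω) (Y i) ℙ := by
        have h := hindep.indepFun_finsetSum_of_notMem hmeas hi
        have he : (∑ j ∈ s, Y j) = fun ω => ∑ j ∈ s, Y j ω := by
          funext ω; simp
        rwa [he] at h
      have step := vbe_step hp1 hp2 _ _ hXm (hmeas i) hind' (hmean i) ih1 (hmom i)
      have hsum : ∀ ω, ∑ k ∈ insert i s, Y k ω = (∑ k ∈ s, Y k ω) + Y i ω := by
        intro ω
        rw [Finset.sum_insert hi, add_comm]
      constructor
      · refine step.1.congr (Filter.Eventually.of_forall fun ω => ?_)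
        simp only [hsum]
      · have heq : ∫ ω, |∑ k ∈ insert i s, Y k ω| ^ p
            = ∫ ω, |(∑ k ∈ s, Y k ω) + Y i ω| ^ p := by
          refine integral_congr_ae (Filter.Eventually.of_forall fun ω => ?_)
          simp only [hsum]
        rw [heq, Finset.sum_insert hi]
        calc ∫ ω, |(∑ k ∈ s, Y k ω) + Y i ω| ^ p
            ≤ (∫ ω, |∑ k ∈ s, Y k ω| ^ p) + 2 * ∫ ω, |Y i ω| ^ p := step.2
          _ ≤ (2 * ∑ k ∈ s, ∫ ω, |Y k ω| ^ p) + 2 * ∫ ω, |Y i ω| ^ p := by linarith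
          _ = 2 * ((∫ ω, |Y i ω| ^ p) + ∑ k ∈ s, ∫ ω, |Y k ω| ^ p) := by ring
  exact (main Finset.univ).2
end

section
/- Let (Y_k) be i.i.d. real random variables such that E[e^{λ Y_1}] < ∞ for some λ > 0, with E[Y_1] = μ > 0, and let T_n = ∑_{k=1}^n Y_k. Define the counting process ϑ_n = sup{k : T_k ≤ n} and η = 1/μ. Then for D sufficiently large, almost surely |ϑ_n − nη| ≤ D n^{1/2} log n for all but finitely many n. -/
open MeasureTheory ProbabilityTheory Filter

lemma aux_exp_neg {x : ℝ} (hx : 0 ≤ x) : Real.exp (-x) ≤ 1 - x + x^2/2 := by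
  have key : MonotoneOn (fun y : ℝ => 1 - y + y^2/2 - Real.exp (-y)) (Set.Ici 0) := by
    have hd : ∀ y : ℝ, HasDerivAt (fun y : ℝ => 1 - y + y^2/2 - Real.exp (-y))
        (-1 + y + Real.exp (-y)) y := by
      intro y
      have h1 : HasDerivAt (fun y : ℝ => Real.exp (-y)) (-Real.exp (-y)) y := by
        simpa [Function.comp_def] using (Real.hasDerivAt_exp (-y)).comp y (hasDerivAt_neg y)
      have h2 : HasDerivAt (fun y : ℝ => 1 - y + y^2/2) (-1 + y) y := by
        have := (((hasDerivAt_pow 2 y).div_const 2).const_add (1 - y))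
        have h3 : HasDerivAt (fun y : ℝ => 1 - y) (-1) y := by
          simpa using (hasDerivAt_id y).const_sub 1
        simpa [pow_one] using h3.fun_add ((hasDerivAt_pow 2 y).div_const 2)
      simpa [sub_eq_add_neg] using h2.fun_add h1.fun_neg
    apply monotoneOn_of_deriv_nonneg (convex_Ici 0)
    · exact (Continuous.continuousOn (by continuity))
    · intro y _; exact (hd y).differentiableAt.differentiableWithinAt
    · intro y hy
      rw [interior_Ici] at hy
      rw [(hd y).deriv]
      nlinarith [Real.add_one_le_exp (-y), (Set.mem_Ioi.1 hy).le]
  have := key Set.self_mem_Ici hx hx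
  simp only [neg_zero, Real.exp_zero] at this
  nlinarith [this]

lemma aux_exp_pos {x : ℝ} (hx : 0 ≤ x) : Real.exp x ≤ 1 + x + x^2/2 * Real.exp x := by
  have key : MonotoneOn (fun y : ℝ => 1 + y + y^2/2 * Real.exp y - Real.exp y) (Set.Ici 0) := by
    have hd : ∀ y : ℝ, HasDerivAt (fun y : ℝ => 1 + y + y^2/2 * Real.exp y - Real.exp y)
        (1 + (y * Real.exp y + y^2/2 * Real.exp y) - Real.exp y) y := by
      intro y
      have h1 : HasDerivAt (fun y : ℝ => 1 + y) 1 y := by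
        simpa using (hasDerivAt_id y).const_add 1
      have h2 : HasDerivAt (fun y : ℝ => y^2/2 * Real.exp y)
          (y * Real.exp y + y^2/2 * Real.exp y) y := by
        have := ((hasDerivAt_pow 2 y).div_const 2).fun_mul (Real.hasDerivAt_exp y)
        simpa [pow_one, mul_comm, mul_assoc, mul_left_comm] using this
      have := (h1.fun_add h2).fun_sub (Real.hasDerivAt_exp y)
      simpa [add_assoc] using this
    apply monotoneOn_of_deriv_nonneg (convex_Ici 0)
    · exact (Continuous.continuousOn (by continuity))
    · intro y _; exact (hd y).differentiableAt.differentiableWithinAt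
    · intro y hy
      rw [interior_Ici] at hy
      rw [(hd y).deriv]
      have h1 : (1 - y) ≤ Real.exp (-y) := by
        have := Real.add_one_le_exp (-y); linarith
      have h2 : Real.exp y * Real.exp (-y) = 1 := by
        rw [← Real.exp_add]; simp
      have h3 := Real.exp_pos y
      nlinarith [mul_le_mul_of_nonneg_left h1 h3.le, (Set.mem_Ioi.1 hy).le, sq_nonneg y,
        mul_nonneg (mul_nonneg (sq_nonneg y) (by norm_num : (0:ℝ) ≤ 1/2)) h3.le]
  have := key Set.self_mem_Ici hx hx
  simp only [Real.exp_zero] at this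
  nlinarith [this]

lemma aux_sq_le_exp {x : ℝ} (hx : 0 ≤ x) : x^2 ≤ 4 * Real.exp x := by
  have h1 : Real.exp (x/2) ≥ 1 + x/2 := by
    have := Real.add_one_le_exp (x/2); linarith
  have h2 : Real.exp x = Real.exp (x/2) * Real.exp (x/2) := by
    rw [← Real.exp_add]; ring_nf
  nlinarith [Real.exp_pos (x/2)]

lemma aux_log_le {n : ℕ} (hn : 4096 ≤ n) : Real.log n ≤ Real.sqrt n / 2 := by
  have hn0 : (0:ℝ) < n := by
    have : (4096:ℝ) ≤ n := by exact_mod_cast hn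
    linarith
  set s := Real.sqrt (n:ℝ) with hs
  set u := Real.sqrt s with hu
  have hs0 : 0 < s := Real.sqrt_pos.2 hn0
  have hu0 : 0 < u := Real.sqrt_pos.2 hs0
  have hs2 : s^2 = n := Real.sq_sqrt hn0.le
  have hu2 : u^2 = s := Real.sq_sqrt hs0.le
  have hlogn : Real.log n = 4 * Real.log u := by
    rw [← hs2, ← hu2]
    rw [Real.log_pow, Real.log_pow]
    push_cast; ring
  have hlogu : Real.log u ≤ u := (Real.log_le_sub_one_of_pos hu0).trans (by linarith)
  have hu8 : 8 ≤ u := by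
    have h64 : (64:ℝ) ≤ s := by
      rw [hs]
      have : Real.sqrt 4096 ≤ Real.sqrt n := Real.sqrt_le_sqrt (by exact_mod_cast hn)
      have h4096 : Real.sqrt (4096:ℝ) = 64 := by
        rw [show (4096:ℝ) = 64^2 by norm_num, Real.sqrt_sq]; norm_num
      linarith
    rw [hu]
    have : Real.sqrt 64 ≤ Real.sqrt s := Real.sqrt_le_sqrt h64
    have h64' : Real.sqrt (64:ℝ) = 8 := by
      rw [show (64:ℝ) = 8^2 by norm_num, Real.sqrt_sq]; norm_num
    linarith
  have : s / 2 = u^2/2 := by rw [hu2]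
  rw [hlogn, this]
  nlinarith

set_option maxHeartbeats 1000000

/-- Renewal counting concentration (Lemma 3.6): if `Y_k` are i.i.d. nonnegative random
variables with an exponential moment and mean `μ > 0`, `T_n = ∑_{k<n} Y_k`,
`ϑ_n = sup{k : T_k ≤ n}` and `η = 1/μ`, then for `D` large enough, almost surely
`|ϑ_n - nη| ≤ D √n log n` for all but finitely many `n`. -/
theorem renewal_counting_concentration
    {Ω : Type*} [MeasureSpace Ω] [IsProbabilityMeasure (ℙ : Measure Ω)]
    (Y : ℕ → Ω → ℝ) (hmeas : ∀ i, Measurable (Y i)) (hnonneg : ∀ i ω, 0 ≤ Y i ω)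
    (hindep : iIndepFun Y ℙ)
    (hident : ∀ i, IdentDistrib (Y i) (Y 0) ℙ ℙ)
    (hexp : ∃ l : ℝ, 0 < l ∧ Integrable (fun ω => Real.exp (l * Y 0 ω)))
    (μ : ℝ) (hμ : μ = ∫ ω, Y 0 ω) (hμpos : 0 < μ) :
    ∃ D : ℝ, ∀ᵐ ω ∂ℙ, ∀ᶠ n : ℕ in atTop,
      |((sSup {k : ℕ | ∑ i ∈ Finset.range k, Y i ω ≤ n} : ℕ) : ℝ) - n * (1 / μ)| ≤
        D * Real.sqrt n * Real.log n := by
  classical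
  obtain ⟨l, hl, hIl⟩ := hexp
  set I : ℝ := ∫ ω, Real.exp (l * Y 0 ω) with hIdef
  have hInn : 0 ≤ I := integral_nonneg fun ω => (Real.exp_pos _).le
  set c : ℝ := 16 / l ^ 2 * I with hcdef
  have hc : 0 ≤ c := by positivity
  -- integrability facts
  have hexp_l : ∀ i, Integrable (fun ω => Real.exp (l * Y i ω)) := by
    intro i
    have hid : IdentDistrib (fun ω => Real.exp (l * Y i ω))
        (fun ω => Real.exp (l * Y 0 ω)) ℙ ℙ :=
      (hident i).comp (Real.measurable_exp.comp (measurable_id.const_mul l))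
    exact hid.integrable_iff.2 hIl
  have hexp_t : ∀ (i : ℕ) (t : ℝ), t ≤ l → Integrable (fun ω => Real.exp (t * Y i ω)) := by
    intro i t ht
    refine ((hexp_l i).add (integrable_const 1)).mono
      (((hmeas i).const_mul t).exp.aestronglyMeasurable) (ae_of_all _ fun ω => ?_)
    have h0 := hnonneg i ω
    have hb : Real.exp (t * Y i ω) ≤ Real.exp (l * Y i ω) + 1 := by
      rcases le_total t 0 with h | h
      · have h1 : t * Y i ω ≤ 0 := mul_nonpos_of_nonpos_of_nonneg h h0
        have h2 : Real.exp (t * Y i ω) ≤ 1 := Real.exp_le_one_iff.2 h1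
        nlinarith [Real.exp_pos (l * Y i ω)]
      · have h1 : t * Y i ω ≤ l * Y i ω := mul_le_mul_of_nonneg_right ht h0
        have h2 := Real.exp_le_exp.2 h1
        linarith
    rw [Real.norm_eq_abs, abs_of_pos (Real.exp_pos _), Real.norm_eq_abs]
    refine hb.trans (le_abs_self _)
  have hYint : ∀ i, Integrable (Y i) := by
    intro i
    refine ((hexp_l i).const_mul (1 / l)).mono (hmeas i).aestronglyMeasurable
      (ae_of_all _ fun ω => ?_)
    have h0 := hnonneg i ω
    have h1 : l * Y i ω ≤ Real.exp (l * Y i ω) := by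
      have := Real.add_one_le_exp (l * Y i ω); linarith
    rw [Real.norm_eq_abs, abs_of_nonneg h0, Real.norm_eq_abs,
      abs_of_nonneg (by positivity : (0:ℝ) ≤ 1 / l * Real.exp (l * Y i ω))]
    rw [one_div, inv_mul_eq_div, le_div_iff₀ hl]
    linarith
  have hmean : ∀ i, ∫ ω, Y i ω = μ := by
    intro i; rw [(hident i).integral_eq, ← hμ]
  have hmgf_eq : ∀ (i : ℕ) (t : ℝ), mgf (Y i) ℙ t = mgf (Y 0) ℙ t := by
    intro i t
    exact ((hident i).comp (Real.measurable_exp.comp (measurable_id.const_mul t))).integral_eq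
  -- pointwise exponential bounds
  have hx2bound : ∀ x : ℝ, 0 ≤ x → x ^ 2 ≤ 16 / l ^ 2 * Real.exp (l / 2 * x) := by
    intro x hx
    have h2 : (l / 2 * x) ^ 2 ≤ 4 * Real.exp (l / 2 * x) := aux_sq_le_exp (by positivity)
    have hl2 : (0:ℝ) < l ^ 2 := by positivity
    rw [div_mul_eq_mul_div, le_div_iff₀ hl2]
    nlinarith [h2]
  have hpt_pos : ∀ x t : ℝ, 0 ≤ x → 0 ≤ t → t ≤ l / 2 →
      Real.exp (t * x) ≤ 1 + t * x + t ^ 2 * (16 / l ^ 2 * Real.exp (l * x)) := by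
    intro x t hx ht htl
    have h1 := aux_exp_pos (mul_nonneg ht hx)
    have hx2 := hx2bound x hx
    have h3 : Real.exp (t * x) ≤ Real.exp (l / 2 * x) :=
      Real.exp_le_exp.2 (mul_le_mul_of_nonneg_right htl hx)
    have h4 : Real.exp (l / 2 * x) * Real.exp (l / 2 * x) = Real.exp (l * x) := by
      rw [← Real.exp_add]; ring_nf
    have h5 : (t * x) ^ 2 / 2 * Real.exp (t * x) ≤
        t ^ 2 * (16 / l ^ 2 * Real.exp (l * x)) := by
      have e1 : (t * x) ^ 2 / 2 * Real.exp (t * x) ≤ (t * x) ^ 2 * Real.exp (l / 2 * x) := by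
        nlinarith [sq_nonneg (t * x), Real.exp_pos (t * x), Real.exp_pos (l / 2 * x)]
      have e3 : x ^ 2 * Real.exp (l / 2 * x) ≤
          16 / l ^ 2 * (Real.exp (l / 2 * x) * Real.exp (l / 2 * x)) := by
        nlinarith [Real.exp_pos (l / 2 * x)]
      calc (t * x) ^ 2 / 2 * Real.exp (t * x) ≤ (t * x) ^ 2 * Real.exp (l / 2 * x) := e1
        _ = t ^ 2 * (x ^ 2 * Real.exp (l / 2 * x)) := by ring
        _ ≤ t ^ 2 * (16 / l ^ 2 * (Real.exp (l / 2 * x) * Real.exp (l / 2 * x))) := by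
            exact mul_le_mul_of_nonneg_left e3 (sq_nonneg t)
        _ = t ^ 2 * (16 / l ^ 2 * Real.exp (l * x)) := by rw [h4]
    linarith
  have hpt_neg : ∀ x t : ℝ, 0 ≤ x → 0 ≤ t →
      Real.exp (-t * x) ≤ 1 - t * x + t ^ 2 * (16 / l ^ 2 * Real.exp (l * x)) := by
    intro x t hx ht
    have h1 : Real.exp (-(t * x)) ≤ 1 - t * x + (t * x) ^ 2 / 2 :=
      aux_exp_neg (mul_nonneg ht hx)
    have hx2 := hx2bound x hx
    have hle : Real.exp (l / 2 * x) ≤ Real.exp (l * x) :=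
      Real.exp_le_exp.2 (by nlinarith)
    have h5 : (t * x) ^ 2 / 2 ≤ t ^ 2 * (16 / l ^ 2 * Real.exp (l * x)) := by
      have : x ^ 2 ≤ 16 / l ^ 2 * Real.exp (l * x) := hx2.trans (by
        have : (0:ℝ) ≤ 16 / l ^ 2 := by positivity
        nlinarith)
      nlinarith [sq_nonneg t, sq_nonneg x]
    rw [neg_mul]
    linarith
  -- mgf bounds
  have hRHSint : ∀ t : ℝ,
      ∫ ω, (1 + t * Y 0 ω + t ^ 2 * (16 / l ^ 2 * Real.exp (l * Y 0 ω))) = 1 + t * μ + c * t ^ 2 := by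
    intro t
    have i1 : Integrable (fun ω => 1 + t * Y 0 ω) ℙ :=
      (integrable_const 1).add ((hYint 0).const_mul t)
    have i2 : Integrable (fun ω => t ^ 2 * (16 / l ^ 2 * Real.exp (l * Y 0 ω))) ℙ :=
      ((hexp_l 0).const_mul _).const_mul _
    have i3 : Integrable (fun ω : Ω => (1:ℝ)) ℙ := integrable_const 1
    have i4 : Integrable (fun ω => t * Y 0 ω) ℙ := (hYint 0).const_mul t
    rw [integral_add i1 i2, integral_add i3 i4,
      integral_const, integral_const_mul, integral_const_mul, integral_const_mul, hmean 0]
    simp only [measure_univ, ENNReal.toReal_one, smul_eq_mul, mul_one, probReal_univ]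
    rw [hcdef, ← hIdef]
    ring
  have hmgf_pos : ∀ t : ℝ, 0 ≤ t → t ≤ l / 2 →
      mgf (Y 0) ℙ t ≤ Real.exp (t * μ + c * t ^ 2) := by
    intro t ht htl
    have hint1 : Integrable (fun ω => Real.exp (t * Y 0 ω)) := hexp_t 0 t (by linarith)
    have hint2 : Integrable (fun ω =>
        1 + t * Y 0 ω + t ^ 2 * (16 / l ^ 2 * Real.exp (l * Y 0 ω))) :=
      ((integrable_const 1).add ((hYint 0).const_mul t)).add
        (((hexp_l 0).const_mul _).const_mul _)
    have step : mgf (Y 0) ℙ t ≤ 1 + t * μ + c * t ^ 2 := by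
      rw [← hRHSint t]
      exact integral_mono hint1 hint2 (fun ω => hpt_pos _ _ (hnonneg 0 ω) ht htl)
    refine step.trans ?_
    have := Real.add_one_le_exp (t * μ + c * t ^ 2)
    linarith
  have hmgf_neg : ∀ t : ℝ, 0 ≤ t →
      mgf (Y 0) ℙ (-t) ≤ Real.exp (-(t * μ) + c * t ^ 2) := by
    intro t ht
    have hint1 : Integrable (fun ω => Real.exp (-t * Y 0 ω)) := hexp_t 0 (-t) (by linarith)
    have hint2 : Integrable (fun ω =>
        1 + -t * Y 0 ω + (-t) ^ 2 * (16 / l ^ 2 * Real.exp (l * Y 0 ω))) :=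
      ((integrable_const 1).add ((hYint 0).const_mul (-t))).add
        (((hexp_l 0).const_mul _).const_mul _)
    have step : mgf (Y 0) ℙ (-t) ≤ 1 + (-t) * μ + c * (-t) ^ 2 := by
      rw [← hRHSint (-t)]
      refine integral_mono hint1 hint2 (fun ω => ?_)
      have h := hpt_neg (Y 0 ω) t (hnonneg 0 ω) ht
      have e2 : 1 + -t * Y 0 ω + (-t) ^ 2 * (16 / l ^ 2 * Real.exp (l * Y 0 ω)) =
          1 - t * Y 0 ω + t ^ 2 * (16 / l ^ 2 * Real.exp (l * Y 0 ω)) := by ring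
      simpa [e2, sub_eq_add_neg] using h
    refine step.trans ?_
    nlinarith [Real.add_one_le_exp (-(t * μ) + c * t ^ 2)]
  -- Chernoff bounds
  have hcher_up : ∀ (k : ℕ) (t a : ℝ), 0 ≤ t → t ≤ l / 2 →
      (ℙ {ω | a ≤ ∑ i ∈ Finset.range k, Y i ω}).toReal ≤
        Real.exp (-(t * a) + k * (t * μ + c * t ^ 2)) := by
    intro k t a ht htl
    have hint : Integrable (fun ω => Real.exp (t * (∑ i ∈ Finset.range k, Y i) ω)) :=
      hindep.integrable_exp_mul_sum hmeas (fun i _ => hexp_t i t (by linarith))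
    have h1 := measure_ge_le_exp_mul_mgf (X := ∑ i ∈ Finset.range k, Y i) (μ := ℙ) a ht hint
    have hset : {ω : Ω | a ≤ (∑ i ∈ Finset.range k, Y i) ω} =
        {ω : Ω | a ≤ ∑ i ∈ Finset.range k, Y i ω} := by
      ext ω; simp [Finset.sum_apply]
    rw [hset] at h1
    have h2 : mgf (∑ i ∈ Finset.range k, Y i) ℙ t = mgf (Y 0) ℙ t ^ k := by
      rw [hindep.mgf_sum hmeas,
        Finset.prod_congr rfl (fun i _ => hmgf_eq i t), Finset.prod_const, Finset.card_range]
    refine h1.trans ?_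
    rw [h2]
    have h3 : mgf (Y 0) ℙ t ^ k ≤ Real.exp (t * μ + c * t ^ 2) ^ k :=
      pow_le_pow_left₀ mgf_nonneg (hmgf_pos t ht htl) k
    calc Real.exp (-t * a) * mgf (Y 0) ℙ t ^ k
        ≤ Real.exp (-t * a) * Real.exp (t * μ + c * t ^ 2) ^ k :=
          mul_le_mul_of_nonneg_left h3 (Real.exp_pos _).le
      _ = Real.exp (-(t * a) + k * (t * μ + c * t ^ 2)) := by
          rw [← Real.exp_nat_mul, ← Real.exp_add, neg_mul]
  have hcher_low : ∀ (k : ℕ) (t a : ℝ), 0 ≤ t →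
      (ℙ {ω | ∑ i ∈ Finset.range k, Y i ω ≤ a}).toReal ≤
        Real.exp (t * a + k * (-(t * μ) + c * t ^ 2)) := by
    intro k t a ht
    have hint : Integrable (fun ω => Real.exp (-t * (∑ i ∈ Finset.range k, Y i) ω)) :=
      hindep.integrable_exp_mul_sum hmeas (fun i _ => hexp_t i (-t) (by linarith))
    have h1 := measure_le_le_exp_mul_mgf (X := ∑ i ∈ Finset.range k, Y i) (μ := ℙ) a
      (neg_nonpos.2 ht) hint
    have hset : {ω : Ω | (∑ i ∈ Finset.range k, Y i) ω ≤ a} =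
        {ω : Ω | ∑ i ∈ Finset.range k, Y i ω ≤ a} := by
      ext ω; simp [Finset.sum_apply]
    rw [hset] at h1
    have h2 : mgf (∑ i ∈ Finset.range k, Y i) ℙ (-t) = mgf (Y 0) ℙ (-t) ^ k := by
      rw [hindep.mgf_sum hmeas,
        Finset.prod_congr rfl (fun i _ => hmgf_eq i (-t)), Finset.prod_const, Finset.card_range]
    refine h1.trans ?_
    rw [h2]
    have h3 : mgf (Y 0) ℙ (-t) ^ k ≤ Real.exp (-(t * μ) + c * t ^ 2) ^ k :=
      pow_le_pow_left₀ mgf_nonneg (hmgf_neg t ht) k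
    calc Real.exp (- -t * a) * mgf (Y 0) ℙ (-t) ^ k
        ≤ Real.exp (- -t * a) * Real.exp (-(t * μ) + c * t ^ 2) ^ k :=
          mul_le_mul_of_nonneg_left h3 (Real.exp_pos _).le
      _ = Real.exp (t * a + k * (-(t * μ) + c * t ^ 2)) := by
          rw [← Real.exp_nat_mul, ← Real.exp_add, neg_neg]
  -- parameters
  set D : ℝ := 2 / μ with hDdef
  have hD0 : 0 ≤ D := by positivity
  refine ⟨D, ?_⟩
  set x : ℕ → ℝ := fun n => n * (1 / μ) + D * Real.sqrt n * Real.log n with hxdef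
  set r : ℕ → ℝ := fun n => n * (1 / μ) - D * Real.sqrt n * Real.log n with hrdef
  set mm : ℕ → ℕ := fun n => ⌊x n⌋₊ + 1 with hmmdef
  set kk : ℕ → ℕ := fun n => ⌈r n⌉₊ with hkkdef
  set C₀ : ℝ := μ + c * (1 / μ + D + 1) with hC0def
  set A : ℕ → Set Ω := fun n => {ω | ∑ i ∈ Finset.range (mm n), Y i ω ≤ (n : ℝ)} with hAdef
  set B : ℕ → Set Ω := fun n => {ω | (n : ℝ) ≤ ∑ i ∈ Finset.range (kk n), Y i ω} with hBdef
  set N₀ : ℕ := max 4096 (⌈(2 / l) ^ 2⌉₊ + 1) with hN0def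
  have hN4096 : (4096 : ℕ) ≤ N₀ := le_max_left _ _
  have hNl : ⌈(2 / l) ^ 2⌉₊ + 1 ≤ N₀ := le_max_right _ _
  -- per-n facts
  have hfacts : ∀ n : ℕ, N₀ ≤ n →
      (1 : ℝ) ≤ n ∧ 0 < Real.sqrt (n:ℝ) ∧ 0 ≤ Real.log n ∧
      Real.log n ≤ Real.sqrt n / 2 ∧ Real.sqrt n * Real.sqrt n = n ∧
      0 ≤ x n ∧ 0 ≤ r n ∧ (Real.sqrt (n:ℝ))⁻¹ ≤ l / 2 ∧ (Real.sqrt (n:ℝ))⁻¹ ≤ 1 := by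
    intro n hn
    have hn4096 : 4096 ≤ n := le_trans hN4096 hn
    have hn1 : (1 : ℝ) ≤ n := by exact_mod_cast le_trans (by norm_num) hn4096
    have hn0 : (0 : ℝ) < n := lt_of_lt_of_le zero_lt_one hn1
    have hs0 : 0 < Real.sqrt (n:ℝ) := Real.sqrt_pos.2 hn0
    have hs1 : 1 ≤ Real.sqrt (n:ℝ) := by
      rw [show (1:ℝ) = Real.sqrt 1 by simp]
      exact Real.sqrt_le_sqrt hn1
    have hlg0 : 0 ≤ Real.log n := Real.log_nonneg hn1
    have hlg : Real.log n ≤ Real.sqrt n / 2 := aux_log_le hn4096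
    have hsq : Real.sqrt (n:ℝ) * Real.sqrt (n:ℝ) = n := Real.mul_self_sqrt hn0.le
    have hx0 : 0 ≤ x n := by
      simp only [hxdef]
      have h1 : (0:ℝ) ≤ (n:ℝ) * (1 / μ) := by positivity
      have h2 : (0:ℝ) ≤ D * Real.sqrt n * Real.log n :=
        mul_nonneg (mul_nonneg hD0 hs0.le) hlg0
      linarith
    have hr0 : 0 ≤ r n := by
      simp only [hrdef, hDdef]
      have h2 : 2 * Real.sqrt n * Real.log n ≤ n := by nlinarith
      have hinv : (0:ℝ) < 1 / μ := by positivity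
      have h3 : (0:ℝ) ≤ 1 / μ * ((n:ℝ) - 2 * Real.sqrt n * Real.log n) := by
        apply mul_nonneg hinv.le; linarith
      have h4 : 1 / μ * ((n:ℝ) - 2 * Real.sqrt n * Real.log n) =
          (n:ℝ) * (1 / μ) - 2 / μ * Real.sqrt n * Real.log n := by ring
      linarith [h4 ▸ h3]
    have htl : (Real.sqrt (n:ℝ))⁻¹ ≤ l / 2 := by
      have hc1 : ((2 / l) ^ 2 : ℝ) ≤ n := by
        have : ((⌈(2 / l) ^ 2⌉₊ : ℝ) + 1) ≤ n := by
          exact_mod_cast le_trans hNl hn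
        have := Nat.le_ceil ((2 / l) ^ 2)
        linarith
      have hc2 : (2 / l : ℝ) ≤ Real.sqrt n := by
        have := Real.sqrt_le_sqrt hc1
        rwa [Real.sqrt_sq (by positivity : (0:ℝ) ≤ 2 / l)] at this
      have hc3 : (Real.sqrt (n:ℝ))⁻¹ ≤ (2 / l : ℝ)⁻¹ :=
        inv_anti₀ (by positivity) hc2
      rwa [inv_div] at hc3
    have ht01 : (Real.sqrt (n:ℝ))⁻¹ ≤ 1 := by
      have := inv_anti₀ zero_lt_one hs1
      simpa using this
    exact ⟨hn1, hs0, hlg0, hlg, hsq, hx0, hr0, htl, ht01⟩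
  -- tail bound for A
  have hA_bound : ∀ n : ℕ, N₀ ≤ n →
      ℙ (A n) ≤ ENNReal.ofReal (Real.exp C₀ * (n:ℝ) ^ (-2 : ℝ)) := by
    intro n hn
    obtain ⟨hn1, hs0, hlg0, hlg, hsq, hx0, hr0, htl, ht01⟩ := hfacts n hn
    have hn0 : (0:ℝ) < n := lt_of_lt_of_le zero_lt_one hn1
    set t : ℝ := (Real.sqrt (n:ℝ))⁻¹ with htdef
    have ht0 : 0 < t := inv_pos.2 hs0
    have ht1 : t * Real.sqrt n = 1 := inv_mul_cancel₀ hs0.ne'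
    have ht2 : t ^ 2 * (n:ℝ) = 1 := by
      linear_combination (t * Real.sqrt n + 1) * ht1 - t ^ 2 * hsq
    have hch := hcher_low (mm n) t (n:ℝ) ht0.le
    have hmx1 : x n ≤ (mm n : ℝ) := by
      simp only [hmmdef]; push_cast; exact (Nat.lt_floor_add_one (x n)).le
    have hmx2 : (mm n : ℝ) ≤ x n + 1 := by
      simp only [hmmdef]; push_cast; have := Nat.floor_le hx0; linarith
    have hexp_le : t * (n:ℝ) + (mm n : ℝ) * (-(t * μ) + c * t ^ 2) ≤
        -2 * Real.log n + C₀ := by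
      have hxmu : x n * μ = (n:ℝ) + 2 * Real.sqrt n * Real.log n := by
        simp only [hxdef, hDdef]; field_simp
      have e1 : t * (n:ℝ) - (mm n : ℝ) * (t * μ) ≤ -2 * Real.log n := by
        have h5 : (n:ℝ) - (mm n : ℝ) * μ ≤ -(2 * Real.sqrt n * Real.log n) := by
          have := mul_le_mul_of_nonneg_right hmx1 hμpos.le
          linarith
        have h6 := mul_le_mul_of_nonneg_left h5 ht0.le
        have h7 : t * (2 * Real.sqrt n * Real.log n) = 2 * Real.log n := by
          rw [show t * (2 * Real.sqrt n * Real.log n) =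
            2 * (t * Real.sqrt n) * Real.log n from by ring, ht1]; ring
        nlinarith [h6]
      have hsl : Real.sqrt n * Real.log n ≤ (n:ℝ) := by nlinarith
      have e2 : (mm n : ℝ) * (c * t ^ 2) ≤ c * (1 / μ + D + 1) := by
        have hup : (mm n : ℝ) ≤ (n:ℝ) * (1 / μ) + D * n + n := by
          simp only [hxdef] at hmx2
          have := mul_le_mul_of_nonneg_left hsl hD0
          nlinarith
        have h9 : (mm n : ℝ) * (c * t ^ 2) ≤
            ((n:ℝ) * (1 / μ) + D * n + n) * (c * t ^ 2) :=
          mul_le_mul_of_nonneg_right hup (by positivity)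
        have h10 : ((n:ℝ) * (1 / μ) + D * n + n) * (c * t ^ 2) =
            c * (1 / μ + D + 1) * (t ^ 2 * n) := by ring
        rw [h10, ht2, mul_one] at h9
        exact h9
      simp only [hC0def]
      nlinarith [e1, e2, hμpos.le]
    have hfin : Real.exp (t * (n:ℝ) + (mm n : ℝ) * (-(t * μ) + c * t ^ 2)) ≤
        Real.exp C₀ * (n:ℝ) ^ (-2 : ℝ) := by
      have h8 : (n:ℝ) ^ (-2 : ℝ) = Real.exp (Real.log n * (-2)) :=
        Real.rpow_def_of_pos hn0 _
      rw [h8, ← Real.exp_add]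
      apply Real.exp_le_exp.2
      linarith
    calc ℙ (A n) = ENNReal.ofReal ((ℙ (A n)).toReal) :=
          (ENNReal.ofReal_toReal (measure_ne_top _ _)).symm
      _ ≤ ENNReal.ofReal (Real.exp C₀ * (n:ℝ) ^ (-2 : ℝ)) := by
          apply ENNReal.ofReal_le_ofReal
          refine le_trans ?_ (le_trans hch hfin)
          simp only [hAdef]
          exact le_refl _
  -- tail bound for B
  have hB_bound : ∀ n : ℕ, N₀ ≤ n →
      ℙ (B n) ≤ ENNReal.ofReal (Real.exp C₀ * (n:ℝ) ^ (-2 : ℝ)) := by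
    intro n hn
    obtain ⟨hn1, hs0, hlg0, hlg, hsq, hx0, hr0, htl, ht01⟩ := hfacts n hn
    have hn0 : (0:ℝ) < n := lt_of_lt_of_le zero_lt_one hn1
    set t : ℝ := (Real.sqrt (n:ℝ))⁻¹ with htdef
    have ht0 : 0 < t := inv_pos.2 hs0
    have ht1 : t * Real.sqrt n = 1 := inv_mul_cancel₀ hs0.ne'
    have ht2 : t ^ 2 * (n:ℝ) = 1 := by
      linear_combination (t * Real.sqrt n + 1) * ht1 - t ^ 2 * hsq
    have hch := hcher_up (kk n) t (n:ℝ) ht0.le htl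
    have hkr2 : (kk n : ℝ) ≤ r n + 1 := by
      simp only [hkkdef]; exact (Nat.ceil_lt_add_one hr0).le
    have hexp_le : -(t * (n:ℝ)) + (kk n : ℝ) * (t * μ + c * t ^ 2) ≤
        -2 * Real.log n + C₀ := by
      have hrmu : r n * μ = (n:ℝ) - 2 * Real.sqrt n * Real.log n := by
        simp only [hrdef, hDdef]; field_simp
      have e1 : -(t * (n:ℝ)) + (kk n : ℝ) * (t * μ) ≤ -2 * Real.log n + μ := by
        have p1 : (kk n : ℝ) * (t * μ) ≤ (r n + 1) * (t * μ) :=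
          mul_le_mul_of_nonneg_right hkr2 (mul_nonneg ht0.le hμpos.le)
        have p3 : t * (2 * Real.sqrt n * Real.log n) = 2 * Real.log n := by
          rw [show t * (2 * Real.sqrt n * Real.log n) =
            2 * (t * Real.sqrt n) * Real.log n from by ring, ht1]; ring
        have p4 : t * μ ≤ μ := by nlinarith
        nlinarith [p1]
      have e2 : (kk n : ℝ) * (c * t ^ 2) ≤ c * (1 / μ + D + 1) := by
        have hrup : r n ≤ (n:ℝ) * (1 / μ) := by
          simp only [hrdef]
          have : (0:ℝ) ≤ D * Real.sqrt n * Real.log n :=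
            mul_nonneg (mul_nonneg hD0 hs0.le) hlg0
          linarith
        have hup : (kk n : ℝ) ≤ (n:ℝ) * (1 / μ) + D * n + n := by
          have hDn : (0:ℝ) ≤ D * n := by positivity
          have s1 : (kk n : ℝ) ≤ (n:ℝ) * (1 / μ) + 1 :=
            hkr2.trans (add_le_add_left hrup 1)
          linarith [s1, hDn, hn1]
        have h9 : (kk n : ℝ) * (c * t ^ 2) ≤
            ((n:ℝ) * (1 / μ) + D * n + n) * (c * t ^ 2) :=
          mul_le_mul_of_nonneg_right hup (by positivity)
        have h10 : ((n:ℝ) * (1 / μ) + D * n + n) * (c * t ^ 2) =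
            c * (1 / μ + D + 1) * (t ^ 2 * n) := by ring
        rw [h10, ht2, mul_one] at h9
        exact h9
      simp only [hC0def]
      nlinarith [e1, e2]
    have hfin : Real.exp (-(t * (n:ℝ)) + (kk n : ℝ) * (t * μ + c * t ^ 2)) ≤
        Real.exp C₀ * (n:ℝ) ^ (-2 : ℝ) := by
      have h8 : (n:ℝ) ^ (-2 : ℝ) = Real.exp (Real.log n * (-2)) :=
        Real.rpow_def_of_pos hn0 _
      rw [h8, ← Real.exp_add]
      apply Real.exp_le_exp.2
      linarith
    calc ℙ (B n) = ENNReal.ofReal ((ℙ (B n)).toReal) :=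
          (ENNReal.ofReal_toReal (measure_ne_top _ _)).symm
      _ ≤ ENNReal.ofReal (Real.exp C₀ * (n:ℝ) ^ (-2 : ℝ)) := by
          apply ENNReal.ofReal_le_ofReal
          refine le_trans ?_ (le_trans hch hfin)
          simp only [hBdef]
          exact le_refl _
  -- Borel–Cantelli
  set E : ℕ → Set Ω := fun i => A (i + N₀) ∪ B (i + N₀) with hEdef
  have hE_bound : ∀ i : ℕ,
      ℙ (E i) ≤ ENNReal.ofReal (2 * Real.exp C₀ * ((i + N₀ : ℕ):ℝ) ^ (-2 : ℝ)) := by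
    intro i
    have hge : N₀ ≤ i + N₀ := Nat.le_add_left _ _
    have h1 := hA_bound (i + N₀) hge
    have h2 := hB_bound (i + N₀) hge
    have hnn : (0:ℝ) ≤ Real.exp C₀ * ((i + N₀ : ℕ):ℝ) ^ (-2 : ℝ) := by positivity
    calc ℙ (E i) ≤ ℙ (A (i + N₀)) + ℙ (B (i + N₀)) := measure_union_le _ _
      _ ≤ ENNReal.ofReal (Real.exp C₀ * ((i + N₀ : ℕ):ℝ) ^ (-2 : ℝ)) +
          ENNReal.ofReal (Real.exp C₀ * ((i + N₀ : ℕ):ℝ) ^ (-2 : ℝ)) := add_le_add h1 h2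
      _ = ENNReal.ofReal (2 * Real.exp C₀ * ((i + N₀ : ℕ):ℝ) ^ (-2 : ℝ)) := by
          rw [← ENNReal.ofReal_add hnn hnn]; ring_nf
  have hsummable : Summable (fun i : ℕ => 2 * Real.exp C₀ * ((i + N₀ : ℕ):ℝ) ^ (-2 : ℝ)) := by
    have h0 : Summable (fun n : ℕ => (n:ℝ) ^ (-2 : ℝ)) :=
      Real.summable_nat_rpow.2 (by norm_num)
    exact (((_root_.summable_nat_add_iff N₀).2 h0).mul_left _)
  have hsum_ne : (∑' i, ℙ (E i)) ≠ ⊤ := by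
    refine ne_top_of_le_ne_top ?_ (ENNReal.tsum_le_tsum hE_bound)
    rw [← ENNReal.ofReal_tsum_of_nonneg (fun i => by positivity) hsummable]
    exact ENNReal.ofReal_ne_top
  have hae := MeasureTheory.ae_eventually_notMem hsum_ne
  -- conclusion
  filter_upwards [hae] with ω hω
  rw [eventually_atTop] at hω ⊢
  obtain ⟨M, hM⟩ := hω
  refine ⟨M + N₀, fun n hn => ?_⟩
  have hnN : N₀ ≤ n := le_trans (Nat.le_add_left _ _) hn
  obtain ⟨hn1, hs0, hlg0, hlg, hsq, hx0, hr0, htl, ht01⟩ := hfacts n hnN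
  have hmem : ω ∉ A n ∪ B n := by
    have hidx : (n - N₀) + N₀ = n := Nat.sub_add_cancel hnN
    have := hM (n - N₀) (by omega)
    rw [hEdef] at this
    simp only at this
    rwa [hidx] at this
  have hTA : ¬ (∑ i ∈ Finset.range (mm n), Y i ω ≤ (n : ℝ)) := by
    intro h
    exact hmem (Set.mem_union_left _ (by simp only [hAdef]; exact h))
  have hTB : ¬ ((n : ℝ) ≤ ∑ i ∈ Finset.range (kk n), Y i ω) := by
    intro h
    exact hmem (Set.mem_union_right _ (by simp only [hBdef]; exact h))
  -- deterministic argument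
  set S : Set ℕ := {j : ℕ | ∑ i ∈ Finset.range j, Y i ω ≤ (n : ℝ)} with hSdef
  have hmono : ∀ a b : ℕ, a ≤ b →
      ∑ i ∈ Finset.range a, Y i ω ≤ ∑ i ∈ Finset.range b, Y i ω := fun a b hab =>
    Finset.sum_le_sum_of_subset_of_nonneg (Finset.range_subset_range.2 hab)
      (fun i _ _ => hnonneg i ω)
  have h0S : 0 ∈ S := by simp [hSdef]
  have hub : ∀ j ∈ S, j < mm n := by
    intro j hj
    by_contra h
    push_neg at h
    exact hTA ((hmono _ _ h).trans hj)
  have hbdd : BddAbove S := ⟨mm n, fun j hj => (hub j hj).le⟩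
  have hsSup_mem : sSup S ∈ S := Nat.sSup_mem ⟨0, h0S⟩ hbdd
  have hup' : ((sSup S : ℕ) : ℝ) ≤ x n := by
    have h1 : sSup S < mm n := hub _ hsSup_mem
    have h2 : sSup S ≤ ⌊x n⌋₊ := by
      simp only [hmmdef] at h1; omega
    exact le_trans (by exact_mod_cast h2) (Nat.floor_le hx0)
  have hlow' : r n ≤ ((sSup S : ℕ) : ℝ) := by
    have hkS : kk n ∈ S := by
      simp only [hSdef, Set.mem_setOf_eq]
      exact (lt_of_not_ge hTB).le
    have h1 : kk n ≤ sSup S := le_csSup hbdd hkS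
    have h2 : ((kk n : ℕ) : ℝ) ≤ ((sSup S : ℕ) : ℝ) := Nat.cast_le.2 h1
    refine le_trans ?_ h2
    simp only [hkkdef]
    exact Nat.le_ceil _
  rw [abs_le]
  constructor
  · simp only [hrdef] at hlow'
    linarith
  · simp only [hxdef] at hup'
    linarith
end
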